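/- arXiv:1711.05190 — 3 statements merged into one kernel-verified Lean document; each statement's English description precedes it below -/
import Mathlib

section
/- There exists a minimum power dominating set of G that contains every vertex v that is adjacent to exactly two leaves. -/
namespace RPD

variable {V : Type*}

/-- The closed neighborhood of a set of vertices. -/
def closedNbhd (G : SimpleGraph V) (S : Set V) : Set V :=
  S ∪ {v | ∃ u ∈ S, G.Adj u v}

/-- The zero forcing closure: `ZFC G B v` means `v` eventually gets colored when
starting from the blue set `B` and repeatedly applying the color change rule
(a colored vertex with exactly one uncolored neighbor colors that neighbor). -/
inductive ZFC (G : SimpleGraph V) (B : Set V) : V → Prop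
  | init (v : V) (hv : v ∈ B) : ZFC G B v
  | force (u w : V) (hu : ZFC G B u) (hadj : G.Adj u w)
      (hothers : ∀ x, G.Adj u x → x ≠ w → ZFC G B x) : ZFC G B w

/-- `B` is a zero forcing set of `G`. -/
def IsZFS (G : SimpleGraph V) (B : Set V) : Prop := ∀ v, ZFC G B v

/-- `S` is a power dominating set of `G`: its closed neighborhood is a zero forcing set. -/
def IsPDS (G : SimpleGraph V) (S : Set V) : Prop := IsZFS G (closedNbhd G S)

/-- The restricted zero forcing number `Z(G;X)`; `Z(G) = zNum G ∅`. -/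
noncomputable def zNum (G : SimpleGraph V) (X : Set V) : ℕ :=
  sInf {n | ∃ B : Set V, X ⊆ B ∧ IsZFS G B ∧ B.ncard = n}

/-- The restricted power domination number `γ_P(G;X)`; `γ_P(G) = pdNum G ∅`. -/
noncomputable def pdNum (G : SimpleGraph V) (X : Set V) : ℕ :=
  sInf {n | ∃ S : Set V, X ⊆ S ∧ IsPDS G S ∧ S.ncard = n}

/-- A leaf is a vertex of degree one, i.e. whose neighbor set is a singleton. -/
def IsLeaf (G : SimpleGraph V) (l : V) : Prop := ∃ u, G.neighborSet l = {u}

end RPD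

open RPD

section Aux

variable {V : Type*} {G : SimpleGraph V}

lemma zfc_mono {B B' : Set V} (h : B ⊆ B') {v : V} (hv : ZFC G B v) : ZFC G B' v := by
  induction hv with
  | init v hv => exact ZFC.init v (h hv)
  | force u w hu hadj hothers ihu ih => exact ZFC.force u w ihu hadj fun x hx hne => ih x hx hne

lemma leaf_nbr_eq {l v u : V} (hl : IsLeaf G l) (hv : G.Adj v l) (hu : G.Adj u l) : u = v := by
  obtain ⟨w, hw⟩ := hl
  have h1 : v ∈ G.neighborSet l := hv.symm
  have h2 : u ∈ G.neighborSet l := hu.symm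
  rw [hw, Set.mem_singleton_iff] at h1 h2
  rw [h1, h2]

lemma pds_mem {S : Set V} (hS : IsPDS G S) {v l₁ l₂ : V} (hne : l₁ ≠ l₂)
    (h1 : IsLeaf G l₁) (h2 : IsLeaf G l₂) (a1 : G.Adj v l₁) (a2 : G.Adj v l₂) :
    v ∈ S ∨ l₁ ∈ S ∨ l₂ ∈ S := by
  by_contra h
  push_neg at h
  obtain ⟨hvS, h1S, h2S⟩ := h
  have hn1 : l₁ ∉ closedNbhd G S := by
    rintro (h | ⟨u, huS, hadj⟩)
    · exact h1S h
    · exact hvS ((leaf_nbr_eq h1 a1 hadj) ▸ huS)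
  have hn2 : l₂ ∉ closedNbhd G S := by
    rintro (h | ⟨u, huS, hadj⟩)
    · exact h2S h
    · exact hvS ((leaf_nbr_eq h2 a2 hadj) ▸ huS)
  have key : ∀ w, ZFC G (closedNbhd G S) w → w ≠ l₁ ∧ w ≠ l₂ := by
    intro w hw
    induction hw with
    | init w hw => exact ⟨fun e => hn1 (e ▸ hw), fun e => hn2 (e ▸ hw)⟩
    | force u w hu hadj hothers ihu ih =>
      constructor
      · rintro rfl
        have huv : u = v := leaf_nbr_eq h1 a1 hadj
        exact (ih l₂ (huv ▸ a2) fun e => hne e.symm).2 rfl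
      · rintro rfl
        have huv : u = v := leaf_nbr_eq h2 a2 hadj
        exact (ih l₁ (huv ▸ a1) hne).1 rfl
  exact (key l₁ (hS l₁)).1 rfl

end Aux

theorem stmt6 {V : Type*} [Finite V] (G : SimpleGraph V) :
    ∃ S : Set V, IsPDS G S ∧ S.ncard = pdNum G ∅ ∧
      ∀ v l₁ l₂ : V, l₁ ≠ l₂ →
        (∀ l ∈ ({l₁, l₂} : Set V), IsLeaf G l ∧ G.Adj v l) →
        (∀ l, IsLeaf G l → G.Adj v l → l = l₁ ∨ l = l₂) →
        v ∈ S := by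
  classical
  have huniv : IsPDS G Set.univ := fun v => ZFC.init v (Or.inl trivial)
  have hset : pdNum G ∅ ∈ {n | ∃ S : Set V, (∅ : Set V) ⊆ S ∧ IsPDS G S ∧ S.ncard = n} :=
    Nat.sInf_mem ⟨_, Set.univ, Set.empty_subset _, huniv, rfl⟩
  obtain ⟨S, -, hSpds, hScard⟩ := hset
  -- the set of vertices adjacent to at least two leaves
  set Spec : Set V := {v | ∃ l₁ l₂, l₁ ≠ l₂ ∧ IsLeaf G l₁ ∧ IsLeaf G l₂ ∧ G.Adj v l₁ ∧ G.Adj v l₂}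
    with hSpec
  have leaf_not_spec : ∀ l, IsLeaf G l → l ∉ Spec := by
    rintro l hl ⟨l₁, l₂, hne, -, -, a1, a2⟩
    obtain ⟨u, hu⟩ := hl
    have h1 : l₁ ∈ G.neighborSet l := a1
    have h2 : l₂ ∈ G.neighborSet l := a2
    rw [hu, Set.mem_singleton_iff] at h1 h2
    exact hne (h1.trans h2.symm)
  -- choose for each special vertex not in S a leaf of it belonging to S
  have hchoice : ∀ v ∈ Spec \ S, ∃ l, IsLeaf G l ∧ G.Adj v l ∧ l ∈ S := by
    rintro v ⟨⟨l₁, l₂, hne, hl1, hl2, a1, a2⟩, hvS⟩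
    rcases pds_mem hSpds hne hl1 hl2 a1 a2 with h | h | h
    · exact absurd h hvS
    · exact ⟨l₁, hl1, a1, h⟩
    · exact ⟨l₂, hl2, a2, h⟩
  choose! f hf using hchoice
  set R : Set V := f '' (Spec \ S) with hR
  set S' : Set V := (S \ R) ∪ Spec with hS'
  have hRS : R ⊆ S := by
    rintro _ ⟨v, hv, rfl⟩
    exact (hf v hv).2.2
  have hRprop : ∀ r ∈ R, IsLeaf G r ∧ ∃ v ∈ Spec, G.Adj v r := by
    rintro _ ⟨v, hv, rfl⟩
    exact ⟨(hf v hv).1, v, hv.1, (hf v hv).2.1⟩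
  have hfinj : Set.InjOn f (Spec \ S) := by
    intro a ha b hb hab
    have h1 := hf a ha
    have h2 := hf b hb
    have := leaf_nbr_eq h1.1 h1.2.1 (hab ▸ h2.2.1)
    exact this.symm
  -- closed neighborhood grows
  have hsub : closedNbhd G S ⊆ closedNbhd G S' := by
    rintro w (hw | ⟨u, huS, hadj⟩)
    · by_cases hwR : w ∈ R
      · obtain ⟨-, v, hv, hadj⟩ := hRprop w hwR
        exact Or.inr ⟨v, Or.inr hv, hadj⟩
      · exact Or.inl (Or.inl ⟨hw, hwR⟩)
    · by_cases huR : u ∈ R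
      · obtain ⟨hleaf, v, hv, hadjv⟩ := hRprop u huR
        have : w = v := leaf_nbr_eq hleaf hadjv hadj.symm
        exact Or.inl (Or.inr (this ▸ hv))
      · exact Or.inr ⟨u, Or.inl ⟨huS, huR⟩, hadj⟩
  have hS'pds : IsPDS G S' := fun v => zfc_mono hsub (hSpds v)
  -- cardinality
  have hSdisj : S' = (S \ R) ∪ (Spec \ S) := by
    ext x
    constructor
    · rintro (h | h)
      · exact Or.inl h
      · by_cases hxS : x ∈ S
        · refine Or.inl ⟨hxS, fun hxR => ?_⟩
          exact leaf_not_spec x (hRprop x hxR).1 h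
        · exact Or.inr ⟨h, hxS⟩
    · rintro (h | h)
      · exact Or.inl h
      · exact Or.inr h.1
  have hcard : S'.ncard = S.ncard := by
    rw [hSdisj, Set.ncard_union_eq (by
      rw [Set.disjoint_left]; rintro x ⟨hxS, -⟩ ⟨-, hxS'⟩; exact hxS' hxS)
      (Set.toFinite _) (Set.toFinite _)]
    rw [Set.ncard_diff hRS (Set.toFinite _)]
    have hRcard : R.ncard = (Spec \ S).ncard := by
      rw [hR, Set.ncard_image_of_injOn hfinj]
    rw [← hRcard]
    exact Nat.sub_add_cancel (Set.ncard_le_ncard hRS (Set.toFinite _))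
  have hle : pdNum G ∅ ≤ S'.ncard :=
    Nat.sInf_le ⟨S', Set.empty_subset _, hS'pds, rfl⟩
  have hcard' : S'.ncard = pdNum G ∅ := le_antisymm (hcard.trans_le hScard.le) hle
  refine ⟨S', hS'pds, hcard', ?_⟩
  intro v l₁ l₂ hne hpair _
  have h1 := hpair l₁ (Or.inl rfl)
  have h2 := hpair l₂ (Or.inr rfl)
  exact Or.inr ⟨l₁, l₂, hne, h1.1, h2.1, h1.2, h2.2⟩
end

section
/- Let G' be a graph, V ⊂ V(G'), G = G'[V], H₁,…,H_k the connected components of G'[V'∖V], and S a power dominating set of G. For each i, let N_i = V(H_i) ∩ N_{G'}[V ∖ N_G[S]]. Then γ_P(G';S) ≤ Σᵢ γ_P(H_i;N_i) + |S|. -/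
open SimpleGraph

namespace RPD

variable {V W : Type*}

lemma closedNbhd_mono (G : SimpleGraph V) {S T : Set V} (h : S ⊆ T) :
    closedNbhd G S ⊆ closedNbhd G T := by
  rintro v (hv | ⟨u, hu, huv⟩)
  · exact Or.inl (h hv)
  · exact Or.inr ⟨u, h hu, huv⟩

lemma image_closedNbhd_subset {G : SimpleGraph V} {Gs : SimpleGraph W} (f : Gs →g G)
    (S : Set W) : f '' closedNbhd Gs S ⊆ closedNbhd G (f '' S) := by
  rintro _ ⟨v, hv | ⟨u, hu, huv⟩, rfl⟩
  · exact Or.inl ⟨v, hv, rfl⟩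
  · exact Or.inr ⟨f u, ⟨u, hu, rfl⟩, f.map_adj huv⟩

lemma ZFC.map_embedding {G : SimpleGraph V} {Gs : SimpleGraph W} (f : Gs ↪g G)
    {B₀ : Set W} {B : Set V} (hB₀ : f '' B₀ ⊆ B)
    (hout : ∀ u x, G.Adj (f u) x → x ∉ Set.range f → ZFC G B x)
    {v : W} (hv : ZFC Gs B₀ v) : ZFC G B (f v) := by
  induction hv with
  | init v hv => exact ZFC.init _ (hB₀ ⟨v, hv, rfl⟩)
  | force u w _ huw _ ihu ihothers =>
    refine ZFC.force (f u) (f w) ihu (f.map_adj_iff.2 huw) fun x hux hxw => ?_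
    by_cases hx : x ∈ Set.range f
    · obtain ⟨y, rfl⟩ := hx
      exact ihothers y (f.map_adj_iff.1 hux) fun h => hxw (congrArg f h)
    · exact hout u x hux hx

lemma IsPDS.zfc_map_embedding {G : SimpleGraph V} {Gs : SimpleGraph W} (f : Gs ↪g G)
    {T : Set W} {D : Set V} (hT : IsPDS Gs T) (hTD : f '' T ⊆ D)
    (hout : ∀ u x, G.Adj (f u) x → x ∉ Set.range f → ZFC G (closedNbhd G D) x) (v : W) :
    ZFC G (closedNbhd G D) (f v) :=
  ZFC.map_embedding f
    ((image_closedNbhd_subset f.toHom T).trans (closedNbhd_mono G hTD)) hout (hT v)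

lemma exists_isPDS_ncard_eq_pdNum (G : SimpleGraph V) (X : Set V) :
    ∃ T, X ⊆ T ∧ IsPDS G T ∧ T.ncard = pdNum G X :=
  Nat.sInf_mem (s := {n | ∃ T : Set V, X ⊆ T ∧ IsPDS G T ∧ T.ncard = n})
    ⟨_, Set.univ, Set.subset_univ X, fun v => ZFC.init v (Or.inl trivial), rfl⟩

lemma pdNum_le_ncard {G : SimpleGraph V} {X S : Set V} (hXS : X ⊆ S) (hS : IsPDS G S) :
    pdNum G X ≤ S.ncard :=
  Nat.sInf_le ⟨S, hXS, hS, rfl⟩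

lemma ncard_iUnion_image_le {ι : Type*} [Fintype ι] {α : ι → Type*} (f : ∀ i, α i → V)
    (hf : ∀ i, Function.Injective (f i)) (T : ∀ i, Set (α i)) :
    (⋃ i, f i '' T i).ncard ≤ ∑ i, (T i).ncard := by
  simpa [Set.ncard_image_of_injective _ (hf _)] using
    Finset.univ.set_ncard_biUnion_le fun i => f i '' T i

abbrev componentEmbedding (G : SimpleGraph V) (s : Set V)
    (c : (G.induce s).ConnectedComponent) : (G.induce s).induce c.supp ↪g G :=
  (Embedding.induce s).comp (Embedding.induce c.supp)

lemma mem_range_componentEmbedding_of_adj {G : SimpleGraph V} {s : Set V}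
    {c : (G.induce s).ConnectedComponent} (u : c.supp) {x : V}
    (hux : G.Adj (componentEmbedding G s c u) x) (hx : x ∈ s) :
    x ∈ Set.range (componentEmbedding G s c) :=
  ⟨⟨⟨x, hx⟩, c.mem_supp_of_adj_mem_supp u.2 (hadj := (hux : (G.induce s).Adj u ⟨x, hx⟩))⟩, rfl⟩

theorem isPDS_union_iUnion_image {G : SimpleGraph V} {s S : Set V}
    (hS : IsPDS (G.induce s) (Subtype.val ⁻¹' S))
    (T : ∀ c : (G.induce sᶜ).ConnectedComponent, Set c.supp)
    (hT : ∀ c, IsPDS ((G.induce sᶜ).induce c.supp) (T c))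
    (hNT : ∀ c, componentEmbedding G sᶜ c ⁻¹' closedNbhd G (s \ closedNbhd G S) ⊆ T c) :
    IsPDS G (S ∪ ⋃ c, componentEmbedding G sᶜ c '' T c) := by
  set D := S ∪ ⋃ c, componentEmbedding G sᶜ c '' T c
  have hTD : ∀ c, componentEmbedding G sᶜ c '' T c ⊆ D := fun c =>
    (Set.subset_iUnion (fun c => componentEmbedding G sᶜ c '' T c) c).trans
      Set.subset_union_right
  have boundary : ∀ u x, u ∉ s → x ∈ s → G.Adj u x → x ∈ closedNbhd G D := by
    intro u x hu hx hux
    by_cases hxS : x ∈ closedNbhd G S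
    · exact closedNbhd_mono G Set.subset_union_left hxS
    have huT : (⟨⟨u, hu⟩, rfl⟩ : ((G.induce sᶜ).connectedComponentMk ⟨u, hu⟩).supp) ∈ T _ :=
      hNT _ (Or.inr ⟨x, ⟨hx, hxS⟩, hux.symm⟩)
    exact Or.inr ⟨u, hTD _ ⟨_, huT, rfl⟩, hux⟩
  have outside : ∀ x, x ∉ s → ZFC G (closedNbhd G D) x := by
    intro x hx
    refine (hT ((G.induce sᶜ).connectedComponentMk ⟨x, hx⟩)).zfc_map_embedding _ (hTD _)
      (fun u y huy hy => ZFC.init _ ?_) ⟨⟨x, hx⟩, rfl⟩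
    by_contra hyD
    exact hy (mem_range_componentEmbedding_of_adj u huy
      fun hys => hyD (boundary _ y (u : ↥sᶜ).2 hys huy))
  intro x
  by_cases hx : x ∈ s
  · refine hS.zfc_map_embedding (Embedding.induce s) (fun _ ⟨_, hy, hyx⟩ => Or.inl (hyx ▸ hy))
      (fun _ y _ hy => outside y fun hys => hy ⟨⟨y, hys⟩, rfl⟩) ⟨x, hx⟩
  · exact outside x hx

end RPD

open RPD

theorem stmt11_general {V' : Type*} [Finite V'] (G' : SimpleGraph V') (Vs : Set V')
    (S : Set V') (hS : IsPDS (G'.induce Vs) (Subtype.val ⁻¹' S)) :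
    pdNum G' S ≤
      (∑ᶠ c : (G'.induce Vsᶜ).ConnectedComponent,
        pdNum ((G'.induce Vsᶜ).induce c.supp)
          ((fun x => ((x : ↥(Vsᶜ)) : V')) ⁻¹'
            closedNbhd G' (Vs \ closedNbhd G' S))) + S.ncard := by
  have : Fintype (G'.induce Vsᶜ).ConnectedComponent := Fintype.ofFinite _
  choose T hXT hT hTcard using fun c => exists_isPDS_ncard_eq_pdNum _
    (componentEmbedding G' Vsᶜ c ⁻¹' closedNbhd G' (Vs \ closedNbhd G' S))
  rw [finsum_eq_sum_of_fintype, add_comm]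
  calc pdNum G' S ≤ (S ∪ ⋃ c, componentEmbedding G' Vsᶜ c '' T c).ncard :=
        pdNum_le_ncard Set.subset_union_left (isPDS_union_iUnion_image hS T hT hXT)
    _ ≤ S.ncard + ∑ c, (T c).ncard :=
        (Set.ncard_union_le _ _).trans (Nat.add_le_add_left
          (ncard_iUnion_image_le _ (fun c => (componentEmbedding G' Vsᶜ c).injective) T) _)
    _ = _ := by simp only [hTcard]; rfl

theorem stmt11 {V' : Type*} [Finite V'] (G' : SimpleGraph V') (Vs : Set V')
    (hproper : Vs ⊂ Set.univ) (S : Set V') (hSV : S ⊆ Vs)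
    (hS : IsPDS (G'.induce Vs) (Subtype.val ⁻¹' S)) :
    pdNum G' S ≤
      (∑ᶠ c : (G'.induce Vsᶜ).ConnectedComponent,
        pdNum ((G'.induce Vsᶜ).induce c.supp)
          ((fun x => ((x : ↥(Vsᶜ)) : V')) ⁻¹'
            closedNbhd G' (Vs \ closedNbhd G' S))) + S.ncard :=
  stmt11_general G' Vs S hS
end

section
/- Let X be a minimum zero forcing set of G, let u₁,…,u_k be terminals of k distinct forcing chains associated with X (for some chronological list of forces), and let H₁,…,H_k be pairwise disjoint connected graphs with V(H_i) ∩ V(G) = {u_i}. Let G' = G ∪ H₁ ∪ ⋯ ∪ H_k. Then Z(G';X) = |X| − k + Σᵢ Z(H_i;{u_i}). -/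
open RPD

namespace RPD

variable {V : Type*}

/-- `Forces G B u w` : with blue set `B`, vertex `u` can force `w`
(`u` blue, `w` its unique white neighbor). -/
def Forces (G : SimpleGraph V) (B : Set V) (u w : V) : Prop :=
  u ∈ B ∧ w ∉ B ∧ G.Adj u w ∧ ∀ x, G.Adj u x → x ≠ w → x ∈ B

/-- `IsChrono G B L` : `L` is a valid chronological list of forces starting
from the blue set `B`. -/
def IsChrono (G : SimpleGraph V) : Set V → List (V × V) → Prop
  | _, [] => True
  | B, p :: L => Forces G B p.1 p.2 ∧ IsChrono G (insert p.2 B) L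

/-- The set of blue vertices after performing the forces in `L` starting from `B`. -/
def runList (G : SimpleGraph V) (B : Set V) (L : List (V × V)) : Set V :=
  L.foldl (fun C p => insert p.2 C) B

end RPD

/-!
Upper bound: keep `X` and add, for each `i`, a minimum zero forcing set of `H_i` containing `u_i`,
minus `u_i` itself. Replaying the chronological list colours all of `G`, since a vertex that
forces is not a terminal and so has no neighbour outside `G`; afterwards every `u_i` is blue and
each `H_i` is coloured by its own forcing process, whose forces lift to `G'` because the only
vertex of `H_i` with neighbours outside `H_i` is `u_i`.

Lower bound: if `B ⊇ X` is a zero forcing set of `G'`, then for each `i` the set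
`(B ∩ V(H_i)) ∪ {u_i}` is a zero forcing set of `H_i`, because a vertex of `H_i` other than `u_i`
can only be forced from inside `H_i`. Counting `X ⊆ B ∩ V(G)` and the parts of `B` in the
`V(H_i) \ {u_i}` gives `|B| ≥ |X| + Σ (Z(H_i;{u_i}) - 1)`.
-/

namespace RPD

open scoped Function

variable {V : Type*}

section Forcing

variable {G : SimpleGraph V}

lemma zNum_le_ncard [Finite V] {X B : Set V} (hXB : X ⊆ B) (hB : IsZFS G B) :
    zNum G X ≤ B.ncard :=
  Nat.sInf_le ⟨B, hXB, hB, rfl⟩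

lemma exists_isZFS_ncard_eq_zNum [Finite V] (G : SimpleGraph V) (X : Set V) :
    ∃ B, X ⊆ B ∧ IsZFS G B ∧ B.ncard = zNum G X :=
  Nat.sInf_mem (s := {n | ∃ B, X ⊆ B ∧ IsZFS G B ∧ B.ncard = n})
    ⟨_, Set.univ, Set.subset_univ X, fun v => .init v trivial, rfl⟩

lemma ZFC.of_induce {S B : Set V} {C : Set S} (hC : ∀ v ∈ C, ZFC G B v)
    (hout : ∀ a ∈ S, ∀ x ∉ S, G.Adj a x → ZFC G B x) {w : S}
    (h : ZFC (G.induce S) C w) : ZFC G B w := by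
  induction h with
  | init v hv => exact hC v hv
  | force a w _ hadj _ iha ihothers =>
    refine .force (a : V) w iha hadj fun x hx hxw => ?_
    by_cases hxS : x ∈ S
    · exact ihothers ⟨x, hxS⟩ hx fun h => hxw (congrArg Subtype.val h)
    · exact hout a a.2 x hxS hx

lemma IsChrono.zfc_of_mem_runList_induce {S B : Set V} {C : Set S} {L : List (S × S)}
    (hL : IsChrono (G.induce S) C L) (hnbr : ∀ p ∈ L, ∀ x, G.Adj p.1 x → x ∈ S)
    (hC : ∀ v ∈ C, ZFC G B v) : ∀ v ∈ runList (G.induce S) C L, ZFC G B v := by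
  induction L generalizing C with
  | nil => exact hC
  | cons p L ih =>
    obtain ⟨⟨hp1, -, hadj, hothers⟩, hL⟩ := hL
    have hp2 : ZFC G B p.2 := by
      refine .force (p.1 : V) p.2 (hC _ hp1) hadj fun x hx hxp => ?_
      have hxS := hnbr p List.mem_cons_self x hx
      exact hC ⟨x, hxS⟩ (hothers ⟨x, hxS⟩ hx fun h => hxp (congrArg Subtype.val h))
    refine ih hL (fun q hq => hnbr q (List.mem_cons_of_mem p hq)) fun v hv => ?_
    rcases Set.mem_insert_iff.1 hv with rfl | hv
    exacts [hp2, hC v hv]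

lemma ZFC.induce {S B : Set V} {C : Set S} (hBC : ∀ v : S, (v : V) ∈ B → v ∈ C)
    (hbdry : ∀ v : S, ∀ x ∉ S, G.Adj v x → v ∈ C) {v : V} (h : ZFC G B v) (hv : v ∈ S) :
    ZFC (G.induce S) C ⟨v, hv⟩ := by
  induction h with
  | init v hvB => exact .init _ (hBC ⟨v, hv⟩ hvB)
  | force a w _ hadj _ iha ihothers =>
    by_cases haS : a ∈ S
    · refine .force (⟨a, haS⟩ : S) ⟨w, hv⟩ (iha haS) hadj fun x hx hxw => ?_
      exact ihothers x hx (fun h => hxw (Subtype.ext h)) x.2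
    · exact .init _ (hbdry ⟨w, hv⟩ a haS hadj.symm)

lemma IsZFS.induce {S B : Set V} {C : Set S} (hB : IsZFS G B)
    (hBC : ∀ v : S, (v : V) ∈ B → v ∈ C) (hbdry : ∀ v : S, ∀ x ∉ S, G.Adj v x → v ∈ C) :
    IsZFS (G.induce S) C :=
  fun v => (hB v).induce hBC hbdry v.2

end Forcing

/-- `G` is `G[Vg] ∪ G[W 0] ∪ ⋯ ∪ G[W (k-1)]` as in the paper's `G' = G ∪ H₁ ∪ ⋯ ∪ H_k`, except that
the parts need not cover all vertices. -/
structure IsPendantUnion {k : ℕ} (G : SimpleGraph V) (Vg : Set V) (W : Fin k → Set V)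
    (u : Fin k → V) : Prop where
  disjoint : Pairwise (Disjoint on W)
  inter_eq : ∀ i, W i ∩ Vg = {u i}
  adj_mem : ∀ a b, G.Adj a b → (a ∈ Vg ∧ b ∈ Vg) ∨ ∃ i, a ∈ W i ∧ b ∈ W i

namespace IsPendantUnion

variable {k : ℕ} {G : SimpleGraph V} {Vg : Set V} {W : Fin k → Set V} {u : Fin k → V}

lemma mem_self (hG : IsPendantUnion G Vg W u) (i : Fin k) : u i ∈ W i ∩ Vg :=
  (hG.inter_eq i).symm ▸ rfl

lemma eq_of_mem (hG : IsPendantUnion G Vg W u) {i : Fin k} {v : V} (hvW : v ∈ W i)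
    (hvVg : v ∈ Vg) : v = u i := by
  have h := Set.mem_inter hvW hvVg
  rwa [hG.inter_eq i] at h

lemma index_eq (hG : IsPendantUnion G Vg W u) {i j : Fin k} {v : V} (hi : v ∈ W i)
    (hj : v ∈ W j) : i = j :=
  hG.disjoint.eq (Set.not_disjoint_iff.2 ⟨v, hi, hj⟩)

lemma eq_and_mem_of_adj (hG : IsPendantUnion G Vg W u) {i : Fin k} {a x : V} (haW : a ∈ W i)
    (hxW : x ∉ W i) (hadj : G.Adj a x) : a = u i ∧ x ∈ Vg := by
  rcases hG.adj_mem a x hadj with ⟨haVg, hxVg⟩ | ⟨j, haj, hxj⟩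
  · exact ⟨hG.eq_of_mem haW haVg, hxVg⟩
  · exact absurd (hG.index_eq haW haj ▸ hxj) hxW

lemma mem_of_adj (hG : IsPendantUnion G Vg W u) {a x : V} (haVg : a ∈ Vg) (ha : ∀ i, a ≠ u i)
    (hadj : G.Adj a x) : x ∈ Vg := by
  rcases hG.adj_mem a x hadj with ⟨-, hxVg⟩ | ⟨i, haW, -⟩
  exacts [hxVg, absurd (hG.eq_of_mem haW haVg) (ha i)]

lemma zNum_add_le [Finite V] (hG : IsPendantUnion G Vg W u) (hcover : Vg ∪ ⋃ i, W i = Set.univ)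
    {X : Set V} {L : List (Vg × Vg)} (hchrono : IsChrono (G.induce Vg) (Subtype.val ⁻¹' X) L)
    (hall : runList (G.induce Vg) (Subtype.val ⁻¹' X) L = Set.univ)
    (hterm : ∀ i, ∀ p ∈ L, (p.1 : V) ≠ u i) :
    zNum G X + k ≤ X.ncard + ∑ i, zNum (G.induce (W i)) (Subtype.val ⁻¹' {u i}) := by
  choose C hCu hC hCcard using
    fun i => exists_isZFS_ncard_eq_zNum (G.induce (W i)) (Subtype.val ⁻¹' {u i})
  set D : Fin k → Set V := fun i => Subtype.val '' C i \ {u i}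
  have hDcard : ∀ i, (D i).ncard + 1 = zNum (G.induce (W i)) (Subtype.val ⁻¹' {u i}) := by
    intro i
    rw [Set.ncard_sdiff_singleton_add_one
        (s := Subtype.val '' C i) ⟨⟨u i, (hG.mem_self i).1⟩, hCu i rfl, rfl⟩,
      Set.ncard_image_of_injective _ Subtype.val_injective, hCcard i]
  set B := X ∪ ⋃ i, D i
  have hVg : ∀ v ∈ Vg, ZFC G B v := fun v hv =>
    hchrono.zfc_of_mem_runList_induce
      (fun p hp _ hx => hG.mem_of_adj p.1.2 (fun i => hterm i p hp) hx)
      (fun w hw => .init _ (Or.inl hw)) ⟨v, hv⟩ (hall ▸ trivial)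
  have hW : ∀ i, ∀ v ∈ W i, ZFC G B v := by
    intro i v hv
    refine ZFC.of_induce (fun w hw => ?_)
      (fun a ha x hx hax => hVg x (hG.eq_and_mem_of_adj ha hx hax).2) (hC i ⟨v, hv⟩)
    by_cases hwu : (w : V) = u i
    · exact hwu ▸ hVg _ (hG.mem_self i).2
    · exact .init _ (Or.inr (Set.mem_iUnion.2 ⟨i, ⟨w, hw, rfl⟩, hwu⟩))
  have hB : IsZFS G B := by
    intro v
    rcases hcover.symm ▸ Set.mem_univ v with hv | hv
    · exact hVg v hv
    · obtain ⟨i, hi⟩ := Set.mem_iUnion.1 hv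
      exact hW i v hi
  calc zNum G X + k ≤ B.ncard + k := by grw [zNum_le_ncard Set.subset_union_left hB]
    _ ≤ X.ncard + ∑ i, (D i).ncard + k := by
      grw [Set.ncard_union_le, Set.ncard_iUnion_le_of_fintype]
    _ = X.ncard + ∑ i, zNum (G.induce (W i)) (Subtype.val ⁻¹' {u i}) := by
      simp only [← hDcard, Finset.sum_add_distrib, Finset.sum_const, Finset.card_univ,
        Fintype.card_fin, smul_eq_mul, mul_one, add_assoc]

lemma zNum_induce_le_ncard_add_one [Finite V] (hG : IsPendantUnion G Vg W u) {B : Set V}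
    (hB : IsZFS G B) (i : Fin k) :
    zNum (G.induce (W i)) (Subtype.val ⁻¹' {u i}) ≤ (W i ∩ (B \ Vg)).ncard + 1 := by
  let C : Set (W i) := insert ⟨u i, (hG.mem_self i).1⟩ (Subtype.val ⁻¹' (B \ Vg))
  have hC : IsZFS (G.induce (W i)) C := by
    refine hB.induce (fun v hvB => ?_)
      (fun v x hx hvx => Or.inl (Subtype.ext (hG.eq_and_mem_of_adj v.2 hx hvx).1))
    by_cases hv : (v : V) ∈ Vg
    · exact Or.inl (Subtype.ext (hG.eq_of_mem v.2 hv))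
    · exact Or.inr ⟨hvB, hv⟩
  calc _ ≤ C.ncard := zNum_le_ncard (fun v hv => Or.inl (Subtype.ext hv)) hC
    _ ≤ (Subtype.val ⁻¹' (B \ Vg) : Set (W i)).ncard + 1 := Set.ncard_insert_le _ _
    _ = (W i ∩ (B \ Vg)).ncard + 1 := by
      rw [← Set.ncard_image_of_injective _ Subtype.val_injective, Subtype.image_preimage_coe]

lemma le_zNum_add [Finite V] (hG : IsPendantUnion G Vg W u) {X : Set V} (hXV : X ⊆ Vg) :
    X.ncard + ∑ i, zNum (G.induce (W i)) (Subtype.val ⁻¹' {u i}) ≤ zNum G X + k := by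
  obtain ⟨B, hXB, hB, hBcard⟩ := exists_isZFS_ncard_eq_zNum G X
  set S : Fin k → Set V := fun i => W i ∩ (B \ Vg)
  have hSdisj : Pairwise (Disjoint on S) := fun i j hij =>
    (hG.disjoint hij).mono Set.inter_subset_left Set.inter_subset_left
  have hVgS : Disjoint (B ∩ Vg) (⋃ i, S i) :=
    Set.disjoint_iUnion_right.2 fun i => Set.disjoint_left.2 fun v hv hvS => hvS.2.2 hv.2
  have hsum : X.ncard + ∑ i, (S i).ncard ≤ B.ncard := by
    rw [← finsum_eq_sum_of_fintype, ← Set.ncard_iUnion_of_finite (fun i => Set.toFinite _) hSdisj]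
    calc X.ncard + _ ≤ (B ∩ Vg).ncard + (⋃ i, S i).ncard := by
          grw [Set.ncard_le_ncard (Set.subset_inter hXB hXV)]
      _ = ((B ∩ Vg) ∪ ⋃ i, S i).ncard := (Set.ncard_union_eq hVgS).symm
      _ ≤ B.ncard := Set.ncard_le_ncard
          (Set.union_subset Set.inter_subset_left (Set.iUnion_subset fun i => fun v hv => hv.2.1))
  calc _ ≤ X.ncard + ∑ i, ((S i).ncard + 1) := by
        grw [Finset.sum_le_sum fun i _ => hG.zNum_induce_le_ncard_add_one hB i]
    _ = X.ncard + ∑ i, (S i).ncard + k := by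
      simp only [Finset.sum_add_distrib, Finset.sum_const, Finset.card_univ, Fintype.card_fin,
        smul_eq_mul, mul_one, add_assoc]
    _ ≤ zNum G X + k := by rw [← hBcard]; grw [hsum]

end IsPendantUnion

end RPD

open RPD

/-- A terminal of a forcing chain of a chronological list of forces is a vertex that performs no
force in the list; the `u i` are distinct because the `W i` are disjoint. -/
theorem stmt19_general {V' : Type*} [Finite V'] (G' : SimpleGraph V') (k : ℕ)
    (Vg : Set V') (W : Fin k → Set V') (u : Fin k → V')
    (hcover : Vg ∪ (⋃ i, W i) = Set.univ)
    (hWdisj : ∀ i j, i ≠ j → W i ∩ W j = ∅)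
    (hWVg : ∀ i, W i ∩ Vg = {u i})
    (hedges : ∀ a b, G'.Adj a b → (a ∈ Vg ∧ b ∈ Vg) ∨ ∃ i, a ∈ W i ∧ b ∈ W i)
    (X : Set V') (hXV : X ⊆ Vg)
    (L : List (↥Vg × ↥Vg))
    (hchrono : IsChrono (G'.induce Vg) (Subtype.val ⁻¹' X) L)
    (hall : runList (G'.induce Vg) (Subtype.val ⁻¹' X) L = Set.univ)
    (hterm : ∀ i, ∀ p ∈ L, ((p.1 : ↥Vg) : V') ≠ u i) :
    zNum G' X + k =
      X.ncard + ∑ i : Fin k, zNum (G'.induce (W i)) (Subtype.val ⁻¹' {u i}) := by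
  have hG : IsPendantUnion G' Vg W u :=
    ⟨fun i j hij => Set.disjoint_iff_inter_eq_empty.2 (hWdisj i j hij), hWVg, hedges⟩
  exact le_antisymm (hG.zNum_add_le hcover hchrono hall hterm) (hG.le_zNum_add hXV)

/-- Proposition 4.6: a terminal of a forcing chain of a chronological list of forces
is exactly a vertex that performs no force in the list; `u i` are the terminals of `k`
distinct forcing chains (distinctness is forced by the disjointness of the `W i`). -/
theorem stmt19 {V' : Type*} [Finite V'] (G' : SimpleGraph V') (k : ℕ)
    (Vg : Set V') (W : Fin k → Set V') (u : Fin k → V')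
    (hcover : Vg ∪ (⋃ i, W i) = Set.univ)
    (hWdisj : ∀ i j, i ≠ j → W i ∩ W j = ∅)
    (hWVg : ∀ i, W i ∩ Vg = {u i})
    (hconn : ∀ i, (G'.induce (W i)).Connected)
    (hedges : ∀ a b, G'.Adj a b → (a ∈ Vg ∧ b ∈ Vg) ∨ ∃ i, a ∈ W i ∧ b ∈ W i)
    (X : Set V') (hXV : X ⊆ Vg)
    (hX : IsZFS (G'.induce Vg) (Subtype.val ⁻¹' X))
    (hmin : X.ncard = zNum (G'.induce Vg) ∅)
    (L : List (↥Vg × ↥Vg))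
    (hchrono : IsChrono (G'.induce Vg) (Subtype.val ⁻¹' X) L)
    (hall : runList (G'.induce Vg) (Subtype.val ⁻¹' X) L = Set.univ)
    (hterm : ∀ i, ∀ p ∈ L, ((p.1 : ↥Vg) : V') ≠ u i) :
    zNum G' X + k =
      X.ncard + ∑ i : Fin k, zNum (G'.induce (W i)) (Subtype.val ⁻¹' {u i}) :=
  stmt19_general G' k Vg W u hcover hWdisj hWVg hedges X hXV L hchrono hall hterm
end
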